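/- arXiv:2601.15446 — 4 statements merged into one kernel-verified Lean document; each statement's English description precedes it below -/
import Mathlib

section
/- Theorem (CSS codes of check weight 3): Let C_X, C_Z ⊆ 𝔽₂ⁿ be a CSS code admitting a set of checks of check weight at most 3 (i.e., C_X^⊥ and C_Z^⊥ are each spanned by vectors of Hamming weight at most 3). Then either k = dim C_X + dim C_Z − n ≤ 0, or there exists a nontrivial logical operator of Hamming weight at most 2. Equivalently, a CSS code with check weight 3 must have distance d ≤ 2 or dimension k = 0. -/
/-- Dot product of two vectors over `ZMod 2` (the standard bilinear form). -/
def dotp {i : Type*} [Fintype i] (x y : i → ZMod 2) : ZMod 2 := ∑ j, x j * y j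

/-- The dual code: the orthogonal complement of `C` with respect to the
standard bilinear form `dotp`. -/
def dualCode {i : Type*} [Fintype i] (C : Submodule (ZMod 2) (i → ZMod 2)) :
    Submodule (ZMod 2) (i → ZMod 2) where
  carrier := {u | ∀ v ∈ C, dotp u v = 0}
  add_mem' := by
    intro a b ha hb v hv
    have h1 := ha v hv
    have h2 := hb v hv
    simp only [dotp, Pi.add_apply, add_mul, Finset.sum_add_distrib] at h1 h2 ⊢
    rw [h1, h2, add_zero]
  zero_mem' := by
    intro v hv
    simp [dotp]
  smul_mem' := by
    intro c a ha v hv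
    have h1 := ha v hv
    simp only [dotp] at h1
    simp only [dotp, Pi.smul_apply, smul_eq_mul, mul_assoc, ← Finset.mul_sum]
    rw [h1, mul_zero]

section Infra

variable {n : ℕ}

lemma zmod2_cases (z : ZMod 2) : z = 0 ∨ z = 1 := by revert z; decide

lemma zmod2_add_self (z : ZMod 2) : z + z = 0 := by revert z; decide

lemma dotp_comm (x y : Fin n → ZMod 2) : dotp x y = dotp y x := by
  unfold dotp; exact Finset.sum_congr rfl fun j _ => mul_comm _ _

lemma mem_dualCode {C : Submodule (ZMod 2) (Fin n → ZMod 2)} {u : Fin n → ZMod 2} :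
    u ∈ dualCode C ↔ ∀ v ∈ C, dotp u v = 0 := Iff.rfl

/-- support as a Finset -/
def sp (x : Fin n → ZMod 2) : Finset (Fin n) := {j | x j = 1}

lemma mem_sp {x : Fin n → ZMod 2} {j : Fin n} : j ∈ sp x ↔ x j = 1 := by
  simp [sp]

lemma not_mem_sp {x : Fin n → ZMod 2} {j : Fin n} : j ∉ sp x ↔ x j = 0 := by
  rcases zmod2_cases (x j) with h | h <;> simp [mem_sp, h]

lemma hammingNorm_eq_card (x : Fin n → ZMod 2) : hammingNorm x = (sp x).card := by
  unfold hammingNorm sp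
  congr 1
  ext j
  rcases zmod2_cases (x j) with h | h <;> simp [h]

lemma dotp_eq_card (x y : Fin n → ZMod 2) :
    dotp x y = ((sp x ∩ sp y).card : ZMod 2) := by
  unfold dotp
  rw [Finset.card_eq_sum_ones, Nat.cast_sum]
  rw [← Finset.sum_subset (Finset.subset_univ (sp x ∩ sp y)) (by
    intro j _ hj
    simp only [Finset.mem_inter, mem_sp, not_and] at hj
    rcases zmod2_cases (x j) with h | h
    · simp [h]
    · rcases zmod2_cases (y j) with h' | h'
      · simp [h']
      · exact absurd h' (hj h))]
  refine Finset.sum_congr rfl fun j hj => ?_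
  simp only [Finset.mem_inter, mem_sp] at hj
  simp [hj.1, hj.2]

lemma zmod2_natCast_eq_zero {k : ℕ} : ((k : ZMod 2) = 0) ↔ Even k := by
  rw [ZMod.natCast_eq_zero_iff k 2, even_iff_two_dvd]

lemma dotp_eq_zero_iff {x y : Fin n → ZMod 2} :
    dotp x y = 0 ↔ Even (sp x ∩ sp y).card := by
  rw [dotp_eq_card, zmod2_natCast_eq_zero]

/-- The dot product as a bilinear form. -/
noncomputable def bform (n : ℕ) : LinearMap.BilinForm (ZMod 2) (Fin n → ZMod 2) :=
  LinearMap.mk₂ (ZMod 2) dotp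
    (by intro x y z; unfold dotp; simp [add_mul, Finset.sum_add_distrib])
    (by intro c x y; unfold dotp; simp [Finset.mul_sum, mul_assoc])
    (by intro x y z; unfold dotp; simp [mul_add, Finset.sum_add_distrib])
    (by intro c x y; unfold dotp; simp only [Pi.smul_apply, smul_eq_mul, Finset.mul_sum]
        exact Finset.sum_congr rfl fun j _ => by ring)

@[simp] lemma bform_apply (x y : Fin n → ZMod 2) : bform n x y = dotp x y := rfl

lemma dotp_add_left (x y z : Fin n → ZMod 2) :
    dotp (x + y) z = dotp x z + dotp y z := by
  unfold dotp
  simp [Pi.add_apply, add_mul, Finset.sum_add_distrib]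

def evec (p : Fin n) : Fin n → ZMod 2 := fun j => if j = p then 1 else 0

lemma dotp_evec (x : Fin n → ZMod 2) (p : Fin n) : dotp x (evec p) = x p := by
  unfold dotp evec
  rw [Finset.sum_eq_single p (fun j _ hj => by simp [hj]) (by simp)]
  simp

lemma bform_refl : (bform n).IsRefl := by
  intro x y h
  rwa [bform_apply, dotp_comm] at h

lemma bform_nondeg : (bform n).Nondegenerate := by
  constructor
  · intro x hx
    funext p
    have := hx (evec p)
    rwa [bform_apply, dotp_evec] at this
  · intro x hx
    funext p
    have := hx (evec p)
    rwa [bform_apply, dotp_comm, dotp_evec] at this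

lemma dualCode_eq_orthogonal (C : Submodule (ZMod 2) (Fin n → ZMod 2)) :
    dualCode C = (bform n).orthogonal C := by
  ext u
  constructor
  · intro hu v hv
    have := hu v hv
    rw [bform_apply, dotp_comm]
    exact this
  · intro hu v hv
    have := hu v hv
    rwa [bform_apply, dotp_comm] at this

lemma finrank_dualCode (C : Submodule (ZMod 2) (Fin n → ZMod 2)) :
    Module.finrank (ZMod 2) (dualCode C) = n - Module.finrank (ZMod 2) C := by
  rw [dualCode_eq_orthogonal]
  rw [LinearMap.BilinForm.finrank_orthogonal bform_nondeg C]
  congr 1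
  simp [Module.finrank_pi]

lemma dualCode_dualCode (C : Submodule (ZMod 2) (Fin n → ZMod 2)) :
    dualCode (dualCode C) = C := by
  rw [dualCode_eq_orthogonal, dualCode_eq_orthogonal]
  exact LinearMap.BilinForm.orthogonal_orthogonal bform_nondeg bform_refl C

lemma finrank_add_finrank_dualCode (C : Submodule (ZMod 2) (Fin n → ZMod 2)) :
    Module.finrank (ZMod 2) C + Module.finrank (ZMod 2) (dualCode C) = n := by
  rw [finrank_dualCode]
  have : Module.finrank (ZMod 2) C ≤ n := by
    have := Submodule.finrank_le C
    simpa [Module.finrank_pi] using this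
  omega

lemma mem_dualCode_span {S : Finset (Fin n → ZMod 2)} {u : Fin n → ZMod 2}
    (h : ∀ s ∈ S, dotp u s = 0) :
    ∀ w ∈ Submodule.span (ZMod 2) (S : Set (Fin n → ZMod 2)), dotp u w = 0 := by
  intro w hw
  have hle : Submodule.span (ZMod 2) (S : Set (Fin n → ZMod 2)) ≤
      LinearMap.ker (bform n u) := by
    rw [Submodule.span_le]
    intro s hs
    simp only [SetLike.mem_coe, LinearMap.mem_ker, bform_apply]
    exact h s hs
  have := hle hw
  simpa using this

lemma sp_add (x y : Fin n → ZMod 2) :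
    sp (x + y) = (sp x \ sp y) ∪ (sp y \ sp x) := by
  ext j
  simp only [Finset.mem_union, Finset.mem_sdiff, mem_sp, not_mem_sp, Pi.add_apply]
  rcases zmod2_cases (x j) with h | h <;> rcases zmod2_cases (y j) with h' | h' <;>
    simp [h, h']

lemma norm_add (x y : Fin n → ZMod 2) :
    hammingNorm (x + y) = (sp x \ sp y).card + (sp y \ sp x).card := by
  rw [hammingNorm_eq_card, sp_add, Finset.card_union_of_disjoint]
  exact disjoint_sdiff_sdiff

lemma sp_evec (p : Fin n) : sp (evec p) = {p} := by
  ext j; simp [mem_sp, evec]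

lemma norm_evec (p : Fin n) : hammingNorm (evec p) = 1 := by
  rw [hammingNorm_eq_card, sp_evec]; simp

lemma sp_evec_add {p q : Fin n} (h : p ≠ q) : sp (evec p + evec q) = {p, q} := by
  rw [sp_add, sp_evec, sp_evec]
  ext j
  simp only [Finset.mem_union, Finset.mem_sdiff, Finset.mem_singleton, Finset.mem_insert]
  constructor
  · rintro (⟨rfl, _⟩ | ⟨rfl, _⟩) <;> simp
  · rintro (rfl | rfl)
    · exact Or.inl ⟨rfl, h⟩
    · exact Or.inr ⟨rfl, fun hh => h hh.symm⟩

lemma norm_evec_add {p q : Fin n} (h : p ≠ q) : hammingNorm (evec p + evec q) = 2 := by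
  rw [hammingNorm_eq_card, sp_evec_add h, Finset.card_insert_of_notMem (by simpa using h),
    Finset.card_singleton]

lemma eq_singleton_of_card_le_one {α : Type*} {s : Finset α} {x : α}
    (hx : x ∈ s) (h : s.card ≤ 1) : s = {x} :=
  Finset.eq_singleton_iff_unique_mem.mpr
    ⟨hx, fun y hy => Finset.card_le_one.mp h y hy x hx⟩

end Infra

section Core

variable {n : ℕ}

lemma core {A B : Submodule (ZMod 2) (Fin n → ZMod 2)}
    {S T : Finset (Fin n → ZMod 2)}
    (hSA : Submodule.span (ZMod 2) (S : Set (Fin n → ZMod 2)) = A)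
    (hTB : Submodule.span (ZMod 2) (T : Set (Fin n → ZMod 2)) = B)
    (hwS : ∀ s ∈ S, hammingNorm s ≤ 3) (hwT : ∀ t ∈ T, hammingNorm t ≤ 3)
    (hAB : ∀ a ∈ A, ∀ b ∈ B, dotp a b = 0)
    (H1 : ∀ u : Fin n → ZMod 2, hammingNorm u ≤ 2 → u ∈ dualCode B → u ∈ A)
    (H2 : ∀ u : Fin n → ZMod 2, hammingNorm u ≤ 2 → u ∈ dualCode A → u ∈ B) :
    dualCode B ≤ A := by
  -- A is contained in dualCode B
  have hA_le : A ≤ dualCode B := by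
    intro a ha
    exact fun b hb => hAB a ha b hb
  have hSmemA : ∀ s ∈ S, s ∈ A := fun s hs => hSA ▸ Submodule.subset_span hs
  have hTmemB : ∀ t ∈ T, t ∈ B := fun t ht => hTB ▸ Submodule.subset_span ht
  suffices key : ∀ m : ℕ, ∀ v : Fin n → ZMod 2,
      hammingNorm v = m → v ∈ dualCode B → v ∈ A by
    intro v hv
    exact key (hammingNorm v) v rfl hv
  intro m
  induction m using Nat.strong_induction_on with
  | _ m IH =>
  intro v hvm hvQ
  by_cases hred : ∃ a ∈ A, hammingNorm (v + a) < m
  · obtain ⟨a, haA, hlt⟩ := hred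
    have hva : v + a ∈ dualCode B := Submodule.add_mem _ hvQ (hA_le haA)
    have hmem : v + a ∈ A := IH _ hlt (v + a) rfl hva
    have hvv : v = (v + a) + a := by
      funext j
      simp only [Pi.add_apply]
      rw [add_assoc, zmod2_add_self, add_zero]
    rw [hvv]
    exact Submodule.add_mem _ hmem haA
  · push_neg at hred
    by_cases hv0 : v = 0
    · rw [hv0]; exact Submodule.zero_mem _
    · exfalso
      -- v is nonzero; derive a contradiction
      have hWne : (sp v).Nonempty := by
        by_contra h
        rw [Finset.not_nonempty_iff_eq_empty] at h
        apply hv0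
        funext j
        have : j ∉ sp v := h ▸ Finset.notMem_empty j
        exact not_mem_sp.mp this
      have hm : (sp v).card = m := by rw [← hammingNorm_eq_card, hvm]
      -- Z-checks meet the support of v evenly, in 0 or 2 points
      have htW : ∀ t ∈ T, (sp t ∩ sp v).card = 0 ∨ (sp t ∩ sp v).card = 2 := by
        intro t ht
        have h0 : dotp v t = 0 := hvQ t (hTmemB t ht)
        have heven : Even (sp v ∩ sp t).card := dotp_eq_zero_iff.mp h0
        rw [Finset.inter_comm] at heven
        have hle : (sp t ∩ sp v).card ≤ 3 := by
          calc (sp t ∩ sp v).card ≤ (sp t).card := Finset.card_le_card Finset.inter_subset_left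
          _ ≤ 3 := by rw [← hammingNorm_eq_card]; exact hwT t ht
        obtain ⟨r, hr⟩ := heven
        omega
      -- no single-coordinate vector in the support of v is orthogonal to all of B
      have hsmall1 : ∀ p ∈ sp v, evec p ∉ dualCode B := by
        intro p hp hQ
        have hA' : evec p ∈ A := H1 _ (by rw [norm_evec]; omega) hQ
        have := hred _ hA'
        rw [norm_add, sp_evec] at this
        have h1 : ({p} : Finset (Fin n)) \ sp v = ∅ := by
          rw [Finset.sdiff_eq_empty_iff_subset, Finset.singleton_subset_iff]; exact hp
        have h2 : (sp v \ {p}).card = m - 1 := by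
          rw [Finset.card_sdiff_of_subset (Finset.singleton_subset_iff.mpr hp), hm, Finset.card_singleton]
        have hm1 : 1 ≤ m := by
          rw [← hm]; exact Finset.card_pos.mpr ⟨p, hp⟩
        rw [h1, h2] at this
        simp at this
        omega
      -- no two-coordinate vector inside the support of v is orthogonal to all of B
      have hsmall2 : ∀ p ∈ sp v, ∀ q ∈ sp v, p ≠ q → evec p + evec q ∉ dualCode B := by
        intro p hp q hq hpq hQ
        have hA' : evec p + evec q ∈ A := H1 _ (by rw [norm_evec_add hpq]) hQ
        have := hred _ hA'
        rw [norm_add, sp_evec_add hpq] at this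
        have hsub : ({p, q} : Finset (Fin n)) ⊆ sp v := by
          intro j hj
          rcases Finset.mem_insert.mp hj with rfl | hj
          · exact hp
          · rw [Finset.mem_singleton] at hj; exact hj ▸ hq
        have h1 : ({p, q} : Finset (Fin n)) \ sp v = ∅ := by
          rw [Finset.sdiff_eq_empty_iff_subset]; exact hsub
        have hcard2 : ({p, q} : Finset (Fin n)).card = 2 := by
          rw [Finset.card_insert_of_notMem (by simpa using hpq), Finset.card_singleton]
        have h2 : (sp v \ {p, q}).card = m - 2 := by
          rw [Finset.card_sdiff_of_subset hsub, hm, hcard2]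
        have hm2 : 2 ≤ m := by
          rw [← hm]
          calc 2 = ({p, q} : Finset (Fin n)).card := hcard2.symm
          _ ≤ (sp v).card := Finset.card_le_card hsub
        rw [h1, h2] at this
        simp at this
        omega
      -- every coordinate of the support of v lies in some Z-check ("edge")
      have hedge : ∀ p ∈ sp v, ∃ t ∈ T, p ∈ sp t := by
        intro p hp
        by_contra h
        push_neg at h
        apply hsmall1 p hp
        intro b hb
        refine mem_dualCode_span ?_ b (by rw [hTB]; exact hb)
        intro t ht
        rw [dotp_comm, dotp_evec]
        exact not_mem_sp.mp (h t ht)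
      -- every coordinate of the support of v lies in a unique X-check position:
      have hxcheck : ∀ p ∈ sp v, ∃ s ∈ S, sp s ∩ sp v = {p} := by
        intro p hp
        have h1 : ∃ s ∈ S, p ∈ sp s := by
          by_contra h
          push_neg at h
          have hpB : evec p ∈ B := by
            refine H2 _ (by rw [norm_evec]; omega) ?_
            intro a ha
            refine mem_dualCode_span ?_ a (by rw [hSA]; exact ha)
            intro s hs
            rw [dotp_comm, dotp_evec]
            exact not_mem_sp.mp (h s hs)
          have := hvQ (evec p) hpB
          rw [dotp_evec] at this
          rw [mem_sp.mp hp] at this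
          exact one_ne_zero this
        obtain ⟨s, hsS, hps⟩ := h1
        have hc : (sp s ∩ sp v).card ≤ 1 := by
          by_contra hc
          push_neg at hc
          have := hred s (hSmemA s hsS)
          rw [norm_add] at this
          have e1 := Finset.card_sdiff_add_card_inter (sp v) (sp s)
          have e2 := Finset.card_sdiff_add_card_inter (sp s) (sp v)
          rw [Finset.inter_comm (sp v) (sp s)] at e1
          have h3 : (sp s).card ≤ 3 := by
            rw [← hammingNorm_eq_card]; exact hwS s hsS
          omega
        exact ⟨s, hsS, eq_singleton_of_card_le_one
          (Finset.mem_inter.mpr ⟨hps, hp⟩) hc⟩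
      -- master orthogonality relation
      have horth : ∀ s ∈ S, ∀ r : Fin n, sp s ∩ sp v = {r} → ∀ t ∈ T,
          Even (({r} ∩ sp t).card + (sp s ∩ (sp t \ sp v)).card) := by
        intro s hs r hr t ht
        have h0 : dotp s t = 0 := hAB s (hSmemA s hs) t (hTmemB t ht)
        have heven : Even (sp s ∩ sp t).card := dotp_eq_zero_iff.mp h0
        have hdecomp : sp s ∩ sp t = ({r} ∩ sp t) ∪ (sp s ∩ (sp t \ sp v)) := by
          rw [← hr]
          ext j
          simp only [Finset.mem_inter, Finset.mem_union, Finset.mem_sdiff]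
          by_cases hj : j ∈ sp v <;> tauto
        have hdisj : Disjoint ({r} ∩ sp t) (sp s ∩ (sp t \ sp v)) := by
          rw [Finset.disjoint_left]
          intro j hj1 hj2
          simp only [Finset.mem_inter, Finset.mem_singleton] at hj1
          simp only [Finset.mem_inter, Finset.mem_sdiff] at hj2
          apply hj2.2.2
          have : j ∈ sp s ∩ sp v := by rw [hr, Finset.mem_singleton]; exact hj1.1
          exact (Finset.mem_inter.mp this).2
        rw [hdecomp, Finset.card_union_of_disjoint hdisj] at heven
        exact heven
      -- every edge has a unique external coordinate
      have hext : ∀ t ∈ T, ∀ p, p ∈ sp t → p ∈ sp v → ∃ x, sp t \ sp v = {x} := by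
        intro t ht p hpt hpv
        obtain ⟨s, hsS, hs⟩ := hxcheck p hpv
        have h1 := horth s hsS p hs t ht
        have h2 : ({p} ∩ sp t).card = 1 := by
          rw [Finset.singleton_inter_of_mem hpt, Finset.card_singleton]
        rw [h2] at h1
        have h3 : (sp s ∩ (sp t \ sp v)).Nonempty := by
          rw [← Finset.card_pos]
          obtain ⟨r, hr⟩ := h1
          omega
        obtain ⟨x, hx⟩ := h3
        rw [Finset.mem_inter] at hx
        have hcard : (sp t \ sp v).card ≤ 1 := by
          have e2 := Finset.card_sdiff_add_card_inter (sp t) (sp v)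
          have h3' : (sp t).card ≤ 3 := by
            rw [← hammingNorm_eq_card]; exact hwT t ht
          have hc2 : (sp t ∩ sp v).card = 2 := by
            rcases htW t ht with h | h
            · exfalso
              have : p ∈ sp t ∩ sp v := Finset.mem_inter.mpr ⟨hpt, hpv⟩
              rw [Finset.card_eq_zero] at h
              rw [h] at this
              exact Finset.notMem_empty p this
            · exact h
          omega
        exact ⟨x, eq_singleton_of_card_le_one hx.2 hcard⟩
      -- key orthogonality: for an X-check at r and an edge with external x
      have key_orth : ∀ s ∈ S, ∀ r : Fin n, sp s ∩ sp v = {r} → ∀ t ∈ T, ∀ x : Fin n,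
          sp t \ sp v = {x} → (r ∈ sp t ↔ x ∈ sp s) := by
        intro s hs r hr t ht x hx
        have h1 := horth s hs r hr t ht
        rw [hx] at h1
        by_cases hrt : r ∈ sp t <;> by_cases hxs : x ∈ sp s
        · simp [hrt, hxs]
        · exfalso
          rw [Finset.singleton_inter_of_mem hrt,
            Finset.inter_singleton_of_notMem hxs] at h1
          simp at h1
        · exfalso
          rw [Finset.singleton_inter_of_notMem hrt,
            Finset.inter_singleton_of_mem hxs] at h1
          simp at h1
        · simp [hrt, hxs]
      -- choose an X-check at each point of the support
      have hchoice1 : ∀ p : Fin n, ∃ s, p ∈ sp v → (s ∈ S ∧ sp s ∩ sp v = {p}) := by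
        intro p
        by_cases hp : p ∈ sp v
        · obtain ⟨s, hsS, hs⟩ := hxcheck p hp
          exact ⟨s, fun _ => ⟨hsS, hs⟩⟩
        · exact ⟨0, fun h => absurd h hp⟩
      choose f hf using hchoice1
      -- choose an edge at each point
      have hchoice2 : ∀ p : Fin n, ∃ t, p ∈ sp v → (t ∈ T ∧ p ∈ sp t) := by
        intro p
        by_cases hp : p ∈ sp v
        · obtain ⟨t, htT, ht⟩ := hedge p hp
          exact ⟨t, fun _ => ⟨htT, ht⟩⟩
        · exact ⟨0, fun h => absurd h hp⟩
      choose g hg using hchoice2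
      -- choose the external coordinate of the chosen edge
      have hchoice3 : ∀ p : Fin n, ∃ x, p ∈ sp v → sp (g p) \ sp v = {x} := by
        intro p
        by_cases hp : p ∈ sp v
        · obtain ⟨x, hx⟩ := hext (g p) ((hg p hp).1) p ((hg p hp).2) hp
          exact ⟨x, fun _ => hx⟩
        · exact ⟨p, fun h => absurd h hp⟩
      choose xf hxf using hchoice3
      -- the sum of the chosen X-checks
      set a : Fin n → ZMod 2 := ∑ p ∈ sp v, f p with ha_def
      have haA : a ∈ A := Submodule.sum_mem _ (fun p hp => hSmemA _ (hf p hp).1)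
      have ha_card : ∀ j : Fin n,
          a j = ((((sp v).filter (fun p => j ∈ sp (f p))).card : ℕ) : ZMod 2) := by
        intro j
        rw [ha_def, Finset.sum_apply]
        rw [← Finset.sum_filter_add_sum_filter_not (sp v) (fun p => j ∈ sp (f p))]
        have e1 : ∀ p ∈ (sp v).filter (fun p => j ∈ sp (f p)), f p j = 1 := by
          intro p hp
          exact mem_sp.mp (Finset.mem_filter.mp hp).2
        have e2 : ∀ p ∈ (sp v).filter (fun p => ¬ j ∈ sp (f p)), f p j = 0 := by
          intro p hp
          exact not_mem_sp.mp (Finset.mem_filter.mp hp).2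
        rw [Finset.sum_congr rfl e1, Finset.sum_congr rfl e2]
        rw [Finset.sum_const, Finset.sum_const_zero, add_zero, nsmul_eq_mul, mul_one]
      -- a is identically 1 on the support of v
      have haW : ∀ p ∈ sp v, a p = 1 := by
        intro p hp
        rw [ha_card p]
        have hfil : (sp v).filter (fun q => p ∈ sp (f q)) = {p} := by
          ext q
          simp only [Finset.mem_filter, Finset.mem_singleton]
          constructor
          · rintro ⟨hq, hpq⟩
            have hmem : p ∈ sp (f q) ∩ sp v := Finset.mem_inter.mpr ⟨hpq, hp⟩
            rw [(hf q hq).2] at hmem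
            exact (Finset.mem_singleton.mp hmem).symm
          · intro hqe
            rw [hqe]
            refine ⟨hp, ?_⟩
            have hmem : p ∈ ({p} : Finset (Fin n)) := Finset.mem_singleton_self p
            rw [← (hf p hp).2] at hmem
            exact (Finset.mem_inter.mp hmem).1
        rw [hfil]
        simp
      -- a vanishes at the external coordinate of every edge
      have haExt : ∀ t ∈ T, ∀ x : Fin n, sp t \ sp v = {x} → a x = 0 := by
        intro t ht x hx
        rw [ha_card x]
        have hfilter : (sp v).filter (fun p => x ∈ sp (f p)) = sp t ∩ sp v := by
          ext r
          simp only [Finset.mem_filter, Finset.mem_inter]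
          constructor
          · rintro ⟨hr, hxr⟩
            exact ⟨(key_orth (f r) (hf r hr).1 r (hf r hr).2 t ht x hx).mpr hxr, hr⟩
          · rintro ⟨hrt, hr⟩
            exact ⟨hr, (key_orth (f r) (hf r hr).1 r (hf r hr).2 t ht x hx).mp hrt⟩
        rw [hfilter]
        rcases htW t ht with h | h <;> rw [h] <;> decide
      -- the support of v is contained in that of a
      have hWsub : sp v ⊆ sp a := fun p hp => mem_sp.mpr (haW p hp)
      have hbig := hred a haA
      rw [norm_add] at hbig
      have hWa : sp v \ sp a = ∅ := by
        rw [Finset.sdiff_eq_empty_iff_subset]; exact hWsub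
      rw [hWa] at hbig
      simp only [Finset.card_empty, zero_add] at hbig
      -- the leftovers
      set D : Fin n → Finset (Fin n) := fun p => (sp (f p) \ sp v).erase (xf p) with hD
      have hsub : sp a \ sp v ⊆ (sp v).biUnion D := by
        intro y hy
        obtain ⟨hya, hynv⟩ := Finset.mem_sdiff.mp hy
        have hay : a y = 1 := mem_sp.mp hya
        have hpex : ∃ p ∈ sp v, y ∈ sp (f p) := by
          by_contra h
          push_neg at h
          rw [ha_card y] at hay
          have hfe : (sp v).filter (fun p => y ∈ sp (f p)) = ∅ := by
            rw [Finset.filter_eq_empty_iff]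
            exact h
          rw [hfe] at hay
          simp at hay
        obtain ⟨p, hp, hyp⟩ := hpex
        refine Finset.mem_biUnion.mpr ⟨p, hp, ?_⟩
        rw [hD]
        refine Finset.mem_erase.mpr ⟨?_, Finset.mem_sdiff.mpr ⟨hyp, hynv⟩⟩
        intro hyx
        have h0 := haExt (g p) (hg p hp).1 (xf p) (hxf p hp)
        rw [← hyx] at h0
        rw [h0] at hay
        exact one_ne_zero hay.symm
      have hDcard : ∀ p ∈ sp v, (D p).card ≤ 1 := by
        intro p hp
        have hpf : p ∈ sp (f p) := by
          have hmem : p ∈ ({p} : Finset (Fin n)) := Finset.mem_singleton_self p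
          rw [← (hf p hp).2] at hmem
          exact (Finset.mem_inter.mp hmem).1
        have hxfp : xf p ∈ sp (f p) :=
          (key_orth (f p) (hf p hp).1 p (hf p hp).2 (g p) (hg p hp).1 (xf p) (hxf p hp)).mp
            (hg p hp).2
        have hxfnv : xf p ∉ sp v := by
          have hmem : xf p ∈ sp (g p) \ sp v := (hxf p hp) ▸ Finset.mem_singleton_self _
          exact (Finset.mem_sdiff.mp hmem).2
        have hxfne : xf p ≠ p := fun h => hxfnv (by rw [h]; exact hp)
        have hsub2 : (sp (f p) \ sp v).erase (xf p) ⊆ ((sp (f p)).erase (xf p)) \ {p} := by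
          intro j hj
          obtain ⟨hj1, hj2⟩ := Finset.mem_erase.mp hj
          obtain ⟨hj3, hj4⟩ := Finset.mem_sdiff.mp hj2
          refine Finset.mem_sdiff.mpr ⟨Finset.mem_erase.mpr ⟨hj1, hj3⟩, ?_⟩
          simp only [Finset.mem_singleton]
          intro hjp
          exact hj4 (hjp ▸ hp)
        have hstep : (((sp (f p)).erase (xf p)) \ {p}).card ≤ 1 := by
          have h1 : p ∈ (sp (f p)).erase (xf p) :=
            Finset.mem_erase.mpr ⟨hxfne.symm, hpf⟩
          have h2 : ((sp (f p)).erase (xf p)).card = (sp (f p)).card - 1 :=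
            Finset.card_erase_of_mem hxfp
          have h3 := Finset.card_sdiff_of_subset (Finset.singleton_subset_iff.mpr h1)
          have h4 : (sp (f p)).card ≤ 3 := by
            rw [← hammingNorm_eq_card]; exact hwS _ (hf p hp).1
          have h5 : 1 ≤ (sp (f p)).card := Finset.card_pos.mpr ⟨p, hpf⟩
          rw [h3, h2, Finset.card_singleton]
          omega
        calc (D p).card ≤ (((sp (f p)).erase (xf p)) \ {p}).card := Finset.card_le_card hsub2
          _ ≤ 1 := hstep
      have hcardle : ((sp v).biUnion D).card ≤ m := by
        calc ((sp v).biUnion D).card ≤ ∑ p ∈ sp v, (D p).card := Finset.card_biUnion_le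
          _ ≤ ∑ _p ∈ sp v, 1 := Finset.sum_le_sum hDcard
          _ = m := by rw [Finset.sum_const, smul_eq_mul, mul_one, hm]
      have hEq : sp a \ sp v = (sp v).biUnion D :=
        Finset.eq_of_subset_of_card_le hsub (by omega)
      -- every edge through p meets the support of v in the same pair as g p
      have huniq : ∀ p ∈ sp v, ∀ t ∈ T, p ∈ sp t → sp t ∩ sp v = sp (g p) ∩ sp v := by
        intro p hp t ht hpt
        obtain ⟨x, hx⟩ := hext t ht p hpt hp
        have hxeq : x = xf p := by
          by_contra hne
          have hxfp : x ∈ sp (f p) :=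
            (key_orth (f p) (hf p hp).1 p (hf p hp).2 t ht x hx).mp hpt
          have hxnv : x ∉ sp v := by
            have hmem : x ∈ sp t \ sp v := hx ▸ Finset.mem_singleton_self x
            exact (Finset.mem_sdiff.mp hmem).2
          have hxD : x ∈ (sp v).biUnion D :=
            Finset.mem_biUnion.mpr ⟨p, hp, by
              rw [hD]
              exact Finset.mem_erase.mpr ⟨hne, Finset.mem_sdiff.mpr ⟨hxfp, hxnv⟩⟩⟩
          rw [← hEq] at hxD
          have hone : a x = 1 := mem_sp.mp (Finset.mem_sdiff.mp hxD).1
          rw [haExt t ht x hx] at hone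
          exact one_ne_zero hone.symm
        ext r
        simp only [Finset.mem_inter]
        constructor
        · rintro ⟨hrt, hrv⟩
          refine ⟨?_, hrv⟩
          have h1 := (key_orth (f r) (hf r hrv).1 r (hf r hrv).2 t ht x hx).mp hrt
          rw [hxeq] at h1
          exact (key_orth (f r) (hf r hrv).1 r (hf r hrv).2 (g p) (hg p hp).1 (xf p)
            (hxf p hp)).mpr h1
        · rintro ⟨hrg, hrv⟩
          refine ⟨?_, hrv⟩
          have h1 := (key_orth (f r) (hf r hrv).1 r (hf r hrv).2 (g p) (hg p hp).1 (xf p)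
            (hxf p hp)).mp hrg
          rw [← hxeq] at h1
          exact (key_orth (f r) (hf r hrv).1 r (hf r hrv).2 t ht x hx).mpr h1
      -- final contradiction
      obtain ⟨p, hp⟩ := hWne
      have hc2 : (sp (g p) ∩ sp v).card = 2 := by
        rcases htW (g p) (hg p hp).1 with h | h
        · exfalso
          have hmem : p ∈ sp (g p) ∩ sp v := Finset.mem_inter.mpr ⟨(hg p hp).2, hp⟩
          rw [Finset.card_eq_zero] at h
          rw [h] at hmem
          exact Finset.notMem_empty p hmem
        · exact h
      obtain ⟨q, hq_mem, hqp⟩ : ∃ q, q ∈ sp (g p) ∩ sp v ∧ q ≠ p := by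
        obtain ⟨c, d, hcd, hcdeq⟩ := Finset.card_eq_two.mp hc2
        have hpcd : p ∈ ({c, d} : Finset (Fin n)) := by
          rw [← hcdeq]; exact Finset.mem_inter.mpr ⟨(hg p hp).2, hp⟩
        rcases Finset.mem_insert.mp hpcd with rfl | hpd
        · exact ⟨d, by rw [hcdeq]; simp, fun h => hcd h.symm⟩
        · rw [Finset.mem_singleton] at hpd
          subst hpd
          exact ⟨c, by rw [hcdeq]; simp, hcd⟩
      have hqv : q ∈ sp v := (Finset.mem_inter.mp hq_mem).2
      have hqg : q ∈ sp (g p) := (Finset.mem_inter.mp hq_mem).1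
      have hnotQ := hsmall2 p hp q hqv (fun h => hqp h.symm)
      have hexT : ∃ t ∈ T, dotp (evec p + evec q) t ≠ 0 := by
        by_contra h
        push_neg at h
        exact hnotQ (fun b hb => mem_dualCode_span h b (by rw [hTB]; exact hb))
      obtain ⟨t', ht'T, ht'⟩ := hexT
      have hval : dotp (evec p + evec q) t' = t' p + t' q := by
        rw [dotp_add_left, dotp_comm (evec p) t', dotp_comm (evec q) t', dotp_evec, dotp_evec]
      rw [hval] at ht'
      have hiff : p ∈ sp t' ↔ q ∈ sp t' := by
        constructor
        · intro hpt'
          have h1 := huniq p hp t' ht'T hpt'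
          have hmem : q ∈ sp t' ∩ sp v := by rw [h1]; exact hq_mem
          exact (Finset.mem_inter.mp hmem).1
        · intro hqt'
          have h1 := huniq q hqv t' ht'T hqt'
          have h2 := huniq q hqv (g p) (hg p hp).1 hqg
          have hmem : p ∈ sp t' ∩ sp v := by
            rw [h1, ← h2]
            exact Finset.mem_inter.mpr ⟨(hg p hp).2, hp⟩
          exact (Finset.mem_inter.mp hmem).1
      rcases zmod2_cases (t' p) with h1 | h1 <;> rcases zmod2_cases (t' q) with h2 | h2
      · rw [h1, h2] at ht'; exact ht' (by decide)
      · have hm1 := hiff.mpr (mem_sp.mpr h2)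
        rw [mem_sp, h1] at hm1
        exact zero_ne_one hm1
      · have hm1 := hiff.mp (mem_sp.mpr h1)
        rw [mem_sp, h2] at hm1
        exact zero_ne_one hm1
      · rw [h1, h2] at ht'; exact ht' (by decide)


end Core

/-- **Theorem (CSS codes of check weight 3).** -/
theorem css_check_weight_three (n : ℕ)
    (CX CZ : Submodule (ZMod 2) (Fin n → ZMod 2))
    (hCSS : dualCode CX ≤ CZ)
    (SX SZ : Finset (Fin n → ZMod 2))
    (hSX : Submodule.span (ZMod 2) (↑SX : Set (Fin n → ZMod 2)) = dualCode CX)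
    (hSZ : Submodule.span (ZMod 2) (↑SZ : Set (Fin n → ZMod 2)) = dualCode CZ)
    (hwX : ∀ s ∈ SX, hammingNorm s ≤ 3)
    (hwZ : ∀ s ∈ SZ, hammingNorm s ≤ 3) :
    Module.finrank (ZMod 2) CX + Module.finrank (ZMod 2) CZ ≤ n ∨
      ∃ v : Fin n → ZMod 2,
        ((v ∈ CZ ∧ v ∉ dualCode CX) ∨ (v ∈ CX ∧ v ∉ dualCode CZ)) ∧
          hammingNorm v ≤ 2 := by
  by_cases hlog : ∃ v : Fin n → ZMod 2,
      ((v ∈ CZ ∧ v ∉ dualCode CX) ∨ (v ∈ CX ∧ v ∉ dualCode CZ)) ∧ hammingNorm v ≤ 2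
  · exact Or.inr hlog
  · left
    have hQ : dualCode (dualCode CZ) = CZ := dualCode_dualCode _
    have hP : dualCode (dualCode CX) = CX := dualCode_dualCode _
    have key : dualCode (dualCode CZ) ≤ dualCode CX := by
      refine core hSX hSZ hwX hwZ ?_ ?_ ?_
      · intro a ha b hb
        rw [dotp_comm]
        exact hb a (hCSS ha)
      · intro u hu hQu
        rw [hQ] at hQu
        by_contra hnA
        exact hlog ⟨u, Or.inl ⟨hQu, hnA⟩, hu⟩
      · intro u hu hPu
        rw [hP] at hPu
        by_contra hnB
        exact hlog ⟨u, Or.inr ⟨hPu, hnB⟩, hu⟩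
    rw [hQ] at key
    have h1 : Module.finrank (ZMod 2) CZ ≤ Module.finrank (ZMod 2) (dualCode CX) :=
      Submodule.finrank_mono key
    have h2 := finrank_add_finrank_dualCode CX
    omega
end

section
/- Lemma: Every nonzero matrix A over 𝔽₂ satisfies N(A) ≥ d_col(A) · d_row(A): the number of nonzero entries of A is at least the product of the minimum weight of a nonzero vector in its column space and the minimum weight of a nonzero vector in its row space. -/
open Matrix


/-- The number of nonzero entries of a matrix over `𝔽₂`. -/
def numNonzero {a b : Type*} [Fintype a] [Fintype b]
    (A : Matrix a b (ZMod 2)) : ℕ :=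
  (Finset.univ.filter fun ij : a × b => A ij.1 ij.2 ≠ 0).card

/-- `d_col A`: the minimum Hamming weight of a nonzero vector in the column
space of `A` (the range of `x ↦ A *ᵥ x`). -/
noncomputable def dCol {a b : Type*} [Fintype a] [Fintype b]
    (A : Matrix a b (ZMod 2)) : ℕ :=
  sInf (hammingNorm ''
    {v : a → ZMod 2 | v ∈ LinearMap.range A.mulVecLin ∧ v ≠ 0})

/-- `d_row A`: the minimum Hamming weight of a nonzero vector in the row
space of `A`. -/
noncomputable def dRow {a b : Type*} [Fintype a] [Fintype b]
    (A : Matrix a b (ZMod 2)) : ℕ :=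
  dCol A.transpose

lemma dCol_le_hammingNorm {a b : Type*} [Fintype a] [Fintype b]
    (A : Matrix a b (ZMod 2)) (x : b → ZMod 2) (h : A *ᵥ x ≠ 0) :
    dCol A ≤ hammingNorm (A *ᵥ x) :=
  Nat.sInf_le ⟨A *ᵥ x, ⟨⟨x, rfl⟩, h⟩, rfl⟩

/-- **Lemma.**  Every nonzero matrix `A` over `𝔽₂` satisfies
`N(A) ≥ d_col(A) · d_row(A)`. -/
theorem numNonzero_ge_dCol_mul_dRow {a b : Type*} [Fintype a] [Fintype b]
    (A : Matrix a b (ZMod 2)) (hA : A ≠ 0) :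
    dCol A * dRow A ≤ numNonzero A := by
  classical
  obtain ⟨i0, j0, hij⟩ : ∃ i j, A i j ≠ 0 := by
    by_contra h
    push_neg at h
    exact hA (Matrix.ext fun i j => h i j)
  set S : Finset b := Finset.univ.filter (fun j => ∃ i, A i j ≠ 0) with hS
  -- each column in S has the column vector nonzero, and its weight is ≥ dCol A
  have hcol : ∀ j ∈ S, dCol A ≤ hammingNorm (fun i => A i j) := by
    intro j hj
    obtain ⟨i, hi⟩ := (Finset.mem_filter.mp hj).2
    have hcolv : (fun i => A i j) = A *ᵥ Pi.single j 1 := by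
      ext i
      simp [Matrix.mulVec_single]
    rw [hcolv]
    apply dCol_le_hammingNorm
    rw [← hcolv]
    intro h
    exact hi (congrFun h i)
  -- dRow A ≤ S.card, via row i0
  have hrowmem : (fun j => A i0 j) = A.transpose *ᵥ Pi.single i0 1 := by
    ext j
    simp [Matrix.mulVec_single, Matrix.transpose_apply]
  have hrow : dRow A ≤ S.card := by
    have h1 : dRow A ≤ hammingNorm (fun j => A i0 j) := by
      rw [hrowmem]
      apply dCol_le_hammingNorm
      rw [← hrowmem]
      intro h
      exact hij (congrFun h j0)
    refine h1.trans ?_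
    unfold hammingNorm
    apply Finset.card_le_card
    intro j hj
    rw [hS, Finset.mem_filter]
    exact ⟨Finset.mem_univ _, i0, (Finset.mem_filter.mp hj).2⟩
  -- numNonzero as a sum over columns
  have hsum : numNonzero A = ∑ j : b, (Finset.univ.filter fun i => A i j ≠ 0).card := by
    unfold numNonzero
    rw [Finset.card_filter]
    rw [Fintype.sum_prod_type]
    rw [Finset.sum_comm]
    simp [Finset.card_filter]
  have hterm : ∀ j ∈ S, dCol A ≤ (Finset.univ.filter fun i => A i j ≠ 0).card := by
    intro j hj
    exact hcol j hj
  calc dCol A * dRow A ≤ dCol A * S.card := Nat.mul_le_mul_left _ hrow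
    _ = S.card * dCol A := Nat.mul_comm _ _
    _ ≤ ∑ j ∈ S, (Finset.univ.filter fun i => A i j ≠ 0).card := by
        rw [← smul_eq_mul]
        exact Finset.card_nsmul_le_sum S _ (dCol A) hterm
    _ ≤ ∑ j : b, (Finset.univ.filter fun i => A i j ≠ 0).card :=
        Finset.sum_le_sum_of_subset (Finset.subset_univ S)
    _ = numNonzero A := hsum.symm
end

section
/- Lemma: Every nonzero matrix A over 𝔽₂ satisfies rank(A) · d_col(A) ≤ N(A) and rank(A) · d_row(A) ≤ N(A): the number of nonzero entries of A is at least the rank of A times the minimum weight of a nonzero vector in its column space, and likewise for the row space. -/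
open Matrix

lemma numNonzero_eq_sum {a b : Type*} [Fintype a] [Fintype b]
    (A : Matrix a b (ZMod 2)) :
    numNonzero A = ∑ j : b, hammingNorm (fun i => A i j) := by
  classical
  simp only [numNonzero, hammingNorm, Finset.card_filter]
  rw [Fintype.sum_prod_type, Finset.sum_comm]

lemma key {a b : Type*} [Fintype a] [Fintype b] (A : Matrix a b (ZMod 2)) :
    A.rank * dCol A ≤ numNonzero A := by
  classical
  set S : Finset b := Finset.univ.filter (fun j => (fun i => A i j) ≠ 0) with hS
  have hcolmem : ∀ j, (fun i => A i j) ∈ LinearMap.range A.mulVecLin := by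
    intro j
    rw [Matrix.range_mulVecLin]
    exact Submodule.subset_span ⟨j, rfl⟩
  -- rank ≤ S.card
  have hrank : A.rank ≤ S.card := by
    have h1 : A.rank = Module.finrank (ZMod 2)
        (Submodule.span (ZMod 2) (Set.range Aᵀ)) := by
      rw [Matrix.rank, Matrix.range_mulVecLin]; rfl
    have hsub : Set.range Aᵀ ⊆ ↑(Submodule.span (ZMod 2) (↑(S.image Aᵀ) : Set (a → ZMod 2))) := by
      rintro v ⟨j, rfl⟩
      by_cases hj : (fun i => A i j) = 0
      · have : Aᵀ j = 0 := hj
        rw [this]; exact (Submodule.span (ZMod 2) _).zero_mem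
      · exact Submodule.subset_span (by
          refine Finset.mem_coe.mpr (Finset.mem_image.mpr ?_)
          exact ⟨j, by simp [hS, hj], rfl⟩)
    have h2 : Submodule.span (ZMod 2) (Set.range Aᵀ) ≤
        Submodule.span (ZMod 2) (↑(S.image Aᵀ) : Set (a → ZMod 2)) :=
      Submodule.span_le.mpr hsub
    calc A.rank = _ := h1
      _ ≤ Module.finrank (ZMod 2) (Submodule.span (ZMod 2) (↑(S.image Aᵀ) : Set (a → ZMod 2))) :=
          Submodule.finrank_mono h2
      _ ≤ (S.image Aᵀ).card := finrank_span_finset_le_card _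
      _ ≤ S.card := Finset.card_image_le
  -- dCol ≤ weight of each nonzero column
  have hd : ∀ j ∈ S, dCol A ≤ hammingNorm (fun i => A i j) := by
    intro j hj
    apply Nat.sInf_le
    exact ⟨fun i => A i j, ⟨hcolmem j, by simpa [hS] using hj⟩, rfl⟩
  calc A.rank * dCol A ≤ S.card * dCol A := Nat.mul_le_mul_right _ hrank
    _ = S.card • dCol A := (smul_eq_mul _ _).symm
    _ ≤ ∑ j ∈ S, hammingNorm (fun i => A i j) := Finset.card_nsmul_le_sum _ _ _ hd
    _ ≤ ∑ j : b, hammingNorm (fun i => A i j) :=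
        Finset.sum_le_sum_of_subset (Finset.subset_univ _)
    _ = numNonzero A := (numNonzero_eq_sum A).symm

lemma numNonzero_transpose {a b : Type*} [Fintype a] [Fintype b]
    (A : Matrix a b (ZMod 2)) : numNonzero Aᵀ = numNonzero A := by
  classical
  unfold numNonzero
  apply Finset.card_nbij (fun ij => (ij.2, ij.1))
  · intro ij h; simp_all [Matrix.transpose]; exact (Finset.mem_filter.mp h).2
  · intro x hx y hy h
    simpa [Prod.ext_iff, and_comm] using h
  · rintro ⟨i, j⟩ h
    exact ⟨(j, i), by simp_all [Matrix.transpose]; exact Finset.mem_filter.mpr ⟨Finset.mem_univ _, h⟩, rfl⟩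

/-- **Lemma.**  Every nonzero matrix `A` over `𝔽₂` satisfies
`rank(A) · d_col(A) ≤ N(A)` and `rank(A) · d_row(A) ≤ N(A)`. -/
theorem rank_mul_d_le_numNonzero {a b : Type*} [Fintype a] [Fintype b]
    (A : Matrix a b (ZMod 2)) (hA : A ≠ 0) :
    A.rank * dCol A ≤ numNonzero A ∧ A.rank * dRow A ≤ numNonzero A := by
  refine ⟨key A, ?_⟩
  have := key Aᵀ
  rwa [Matrix.rank_transpose, numNonzero_transpose] at this
end

section
/- Theorem (check weight constraint for stabilizer codes): Let S ⊆ 𝔽₂ⁿ × 𝔽₂ⁿ be a stabilizer code with a set of checks each of weight at most w, where w ≥ 1, and let k = n − dim S. Then for every natural number m, the number of elements s ∈ S with |s| ≤ m·w is at least ∑_{j=0}^{m} binom(n − k, j). -/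
/-- The weight of a Pauli operator, identified (modulo phase) with a pair
`(a, b)` of binary vectors (X-part and Z-part): the number of qubits on which
it acts nontrivially. -/
def pairWt {i : Type*} [Fintype i] [DecidableEq i]
    (v : (i → ZMod 2) × (i → ZMod 2)) : ℕ :=
  (Finset.univ.filter fun j => ¬(v.1 j = 0 ∧ v.2 j = 0)).card

/-- The symplectic form `ω((a,b),(a',b')) = a·b' + a'·b` on pairs of binary
vectors, detecting (anti)commutation of Pauli operators. -/
def symp {i : Type*} [Fintype i]
    (v w : (i → ZMod 2) × (i → ZMod 2)) : ZMod 2 :=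
  dotp v.1 w.2 + dotp w.1 v.2

/-- The symplectic dual `S^⊥ω` of a subspace of Pauli operators: all pairs
commuting with every element of `S`. -/
def sympDual {i : Type*} [Fintype i]
    (S : Submodule (ZMod 2) ((i → ZMod 2) × (i → ZMod 2))) :
    Set ((i → ZMod 2) × (i → ZMod 2)) :=
  {v | ∀ s ∈ S, symp v s = 0}

lemma pairWt_zero {i : Type*} [Fintype i] [DecidableEq i] :
    pairWt (0 : (i → ZMod 2) × (i → ZMod 2)) = 0 := by
  simp [pairWt]

lemma pairWt_add_le {i : Type*} [Fintype i] [DecidableEq i]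
    (x y : (i → ZMod 2) × (i → ZMod 2)) :
    pairWt (x + y) ≤ pairWt x + pairWt y := by
  classical
  refine le_trans (Finset.card_le_card ?_) (Finset.card_union_le _ _)
  intro j hj
  simp only [pairWt, Finset.mem_filter, Finset.mem_union, Finset.mem_univ, true_and,
    Prod.fst_add, Prod.snd_add, Pi.add_apply] at hj ⊢
  by_contra h
  push_neg at h
  obtain ⟨⟨h1, h2⟩, ⟨h3, h4⟩⟩ := h
  exact hj ⟨by rw [h1, h3, add_zero], by rw [h2, h4, add_zero]⟩

lemma pairWt_sum_le {i : Type*} [Fintype i] [DecidableEq i]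
    {α : Type*} (T : Finset α) (f : α → (i → ZMod 2) × (i → ZMod 2)) :
    pairWt (∑ t ∈ T, f t) ≤ ∑ t ∈ T, pairWt (f t) := by
  classical
  induction T using Finset.induction with
  | empty => simp [pairWt_zero]
  | insert a s hnot ih =>
    rw [Finset.sum_insert hnot, Finset.sum_insert hnot]
    exact le_trans (pairWt_add_le _ _) (by omega)

/-- **Theorem (check weight constraint for stabilizer codes).**
Let `S ⊆ 𝔽₂ⁿ × 𝔽₂ⁿ` be a stabilizer code with a set of checks each of weight
at most `w ≥ 1`, and let `k = n - dim S`.  Then for every `m`, the number of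
elements `s ∈ S` with `|s| ≤ m·w` is at least `∑_{j=0}^{m} C(n - k, j)`. -/
theorem stab_check_weight_constraint (n w : ℕ) (hw : 1 ≤ w)
    (S : Submodule (ZMod 2) ((Fin n → ZMod 2) × (Fin n → ZMod 2)))
    (hiso : ∀ s ∈ S, ∀ t ∈ S, symp s t = 0)
    (checks : Finset ((Fin n → ZMod 2) × (Fin n → ZMod 2)))
    (hspan : Submodule.span (ZMod 2)
      (↑checks : Set ((Fin n → ZMod 2) × (Fin n → ZMod 2))) = S)
    (hwt : ∀ s ∈ checks, pairWt s ≤ w)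
    (k : ℕ) (hk : k = n - Module.finrank (ZMod 2) S)
    (m : ℕ) :
    (∑ j ∈ Finset.range (m + 1), (n - k).choose j) ≤
      Set.ncard {s : (Fin n → ZMod 2) × (Fin n → ZMod 2) |
        s ∈ S ∧ pairWt s ≤ m * w} := by
  classical
  obtain ⟨b, hb₁, hb₂, hb₃⟩ := exists_linearIndependent (ZMod 2) (↑checks : Set ((Fin n → ZMod 2) × (Fin n → ZMod 2)))
  rw [hspan] at hb₂
  haveI : Fintype b := (Set.Finite.subset checks.finite_toSet hb₁).fintype
  set B : Finset ((Fin n → ZMod 2) × (Fin n → ZMod 2)) := b.toFinset with hBdef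
  have hBb : (↑B : Set ((Fin n → ZMod 2) × (Fin n → ZMod 2))) = b := Set.coe_toFinset b
  have hcard : Module.finrank (ZMod 2) S = B.card := by
    rw [← hb₂]; exact finrank_span_set_eq_card hb₃
  have hle : n - k ≤ B.card := by omega
  -- the family of subsets of B with at most m elements
  set F : Finset (Finset ((Fin n → ZMod 2) × (Fin n → ZMod 2))) :=
    (Finset.range (m + 1)).biUnion (fun j => Finset.powersetCard j B) with hFdef
  have hFcard : F.card = ∑ j ∈ Finset.range (m + 1), B.card.choose j := by
    rw [hFdef, Finset.card_biUnion]
    · exact Finset.sum_congr rfl fun j _ => Finset.card_powersetCard j B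
    · intro i _ j _ hij
      rw [Function.onFun, Finset.disjoint_left]
      intro T hTi hTj
      rw [Finset.mem_powersetCard] at hTi hTj
      exact hij (hTi.2 ▸ hTj.2 ▸ rfl)
  have hmem : ∀ T ∈ F, T ⊆ B ∧ T.card ≤ m := by
    intro T hT
    simp only [hFdef, Finset.mem_biUnion, Finset.mem_range, Finset.mem_powersetCard] at hT
    obtain ⟨j, hj, hTB, hTc⟩ := hT
    exact ⟨hTB, by omega⟩
  have hsub : b ⊆ (S : Set ((Fin n → ZMod 2) × (Fin n → ZMod 2))) := by
    intro x hx
    rw [← hspan]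
    exact Submodule.subset_span (hb₁ hx)
  -- injection from F into the target set
  have hfin : {s : ((Fin n → ZMod 2) × (Fin n → ZMod 2)) | s ∈ S ∧ pairWt s ≤ m * w}.Finite := Set.toFinite _
  rw [Set.ncard_eq_toFinset_card _ hfin]
  have hinj : F.card ≤ hfin.toFinset.card := by
    apply Finset.card_le_card_of_injOn (fun T => ∑ t ∈ T, t)
    · intro T hT
      obtain ⟨hTB, hTc⟩ := hmem T hT
      simp only [Finset.mem_coe, Set.Finite.mem_toFinset, Set.mem_setOf_eq]
      constructor
      · exact Submodule.sum_mem S fun t ht => hsub (hBb ▸ (hTB ht : t ∈ (↑B : Set ((Fin n → ZMod 2) × (Fin n → ZMod 2)))))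
      · calc pairWt (∑ t ∈ T, t) ≤ ∑ t ∈ T, pairWt t := pairWt_sum_le T id
          _ ≤ ∑ _t ∈ T, w := Finset.sum_le_sum fun t ht =>
              hwt t (hb₁ (hBb ▸ (hTB ht : t ∈ (↑B : Set ((Fin n → ZMod 2) × (Fin n → ZMod 2))))))
          _ = T.card * w := by rw [Finset.sum_const, smul_eq_mul]
          _ ≤ m * w := Nat.mul_le_mul_right w hTc
    · intro T₁ hT₁ T₂ hT₂ hEq
      simp only at hEq
      obtain ⟨hT₁B, _⟩ := hmem T₁ (by simpa using hT₁)
      obtain ⟨hT₂B, _⟩ := hmem T₂ (by simpa using hT₂)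
      have key : ∀ T : Finset ((Fin n → ZMod 2) × (Fin n → ZMod 2)), T ⊆ B →
          (∑ i : b, (if (i : ((Fin n → ZMod 2) × (Fin n → ZMod 2))) ∈ T then (1 : ZMod 2) else 0) • (i : ((Fin n → ZMod 2) × (Fin n → ZMod 2)))) = ∑ t ∈ T, t := by
        intro T hTB
        rw [Finset.sum_set_coe (f := fun x => (if x ∈ T then (1 : ZMod 2) else 0) • x) (s := b)]
        show ∑ x ∈ B, (if x ∈ T then (1 : ZMod 2) else 0) • x = _
        rw [← Finset.sum_filter_add_sum_filter_not B (· ∈ T)]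
        have h2 : ∑ x ∈ B.filter (fun x => ¬ x ∈ T),
            (if x ∈ T then (1 : ZMod 2) else 0) • x = 0 := by
          apply Finset.sum_eq_zero
          intro x hx
          rw [Finset.mem_filter] at hx
          simp [hx.2]
        rw [h2, add_zero]
        have h3 : B.filter (· ∈ T) = T := by
          ext x
          simp only [Finset.mem_filter]
          exact ⟨fun h => h.2, fun h => ⟨hTB h, h⟩⟩
        rw [h3]
        apply Finset.sum_congr rfl
        intro x hx
        simp [hx]
      have hzero : ∀ i : b,
          ((if (i : ((Fin n → ZMod 2) × (Fin n → ZMod 2))) ∈ T₁ then (1 : ZMod 2) else 0) +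
           (if (i : ((Fin n → ZMod 2) × (Fin n → ZMod 2))) ∈ T₂ then (1 : ZMod 2) else 0)) = 0 := by
        apply Fintype.linearIndependent_iff.mp hb₃
        rw [Finset.sum_congr rfl (fun i _ => add_smul _ _ _), Finset.sum_add_distrib,
          key T₁ hT₁B, key T₂ hT₂B, hEq, ← two_smul (ZMod 2)]
        have h2 : (2 : ZMod 2) = 0 := rfl
        rw [h2, zero_smul]
      ext x
      constructor
      · intro hx
        have hxb : x ∈ b := hBb ▸ (hT₁B hx : x ∈ (↑B : Set ((Fin n → ZMod 2) × (Fin n → ZMod 2))))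
        have := hzero ⟨x, hxb⟩
        by_contra hx2
        simp [hx, hx2] at this
      · intro hx
        have hxb : x ∈ b := hBb ▸ (hT₂B hx : x ∈ (↑B : Set ((Fin n → ZMod 2) × (Fin n → ZMod 2))))
        have := hzero ⟨x, hxb⟩
        by_contra hx2
        simp [hx, hx2] at this
  calc ∑ j ∈ Finset.range (m + 1), (n - k).choose j
      ≤ ∑ j ∈ Finset.range (m + 1), B.card.choose j :=
        Finset.sum_le_sum fun j _ => Nat.choose_le_choose j hle
    _ = F.card := hFcard.symm
    _ ≤ hfin.toFinset.card := hinj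
end
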